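/- The cascade common information equals the three-variable Wyner common information: C_c(X;Y;Z) = C(X;Y;Z), where C_c(X;Y;Z) = min I(X,Y,Z;U,V) over all pairs (U,V) of finite-alphabet random variables satisfying the Markov chains X−(U,V)−Y and (X,Y,U)−V−Z, and C(X;Y;Z) = min I(X,Y,Z;U) over all finite-alphabet random variables U such that X, Y, Z are mutually conditionally independent given U. -/
import Mathlib


open scoped BigOperators
open Finset Filter

noncomputable section

/-- `p` is a probability mass function on the finite type `α`. -/
def IsPmf {α : Type} [Fintype α] (p : α → ℝ) : Prop :=
  (∀ a, 0 ≤ p a) ∧ ∑ a, p a = 1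

/-- Total variation distance `‖p − q‖_TV = (1/2) Σ |p − q|`. -/
def TV {α : Type} [Fintype α] (p q : α → ℝ) : ℝ :=
  (∑ a, |p a - q a|) / 2

/-- The distribution (law) of the random variable `f` when the underlying
probability mass function is `p`. -/
def lawOf {Ω α : Type} [Fintype Ω] [DecidableEq α]
    (p : Ω → ℝ) (f : Ω → α) : α → ℝ :=
  fun a => ∑ ω, if f ω = a then p ω else 0

/-- Shannon entropy (base 2) of a pmf on a finite type. -/
def H2 {α : Type} [Fintype α] (p : α → ℝ) : ℝ :=
  -∑ a, p a * Real.logb 2 (p a)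

/-- Entropy `H(X)` of a random variable `X` under the pmf `p`. -/
def ent {Ω α : Type} [Fintype Ω] [Fintype α] [DecidableEq α]
    (p : Ω → ℝ) (X : Ω → α) : ℝ :=
  H2 (lawOf p X)

/-- Mutual information `I(X;Y)` under the pmf `p`. -/
def mi {Ω α β : Type} [Fintype Ω] [Fintype α] [Fintype β]
    [DecidableEq α] [DecidableEq β]
    (p : Ω → ℝ) (X : Ω → α) (Y : Ω → β) : ℝ :=
  ent p X + ent p Y - ent p (fun ω => (X ω, Y ω))

/-- Conditional mutual information `I(X;Y|W)` under the pmf `p`. -/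
def cmi {Ω α β γ : Type} [Fintype Ω] [Fintype α] [Fintype β] [Fintype γ]
    [DecidableEq α] [DecidableEq β] [DecidableEq γ]
    (p : Ω → ℝ) (X : Ω → α) (Y : Ω → β) (W : Ω → γ) : ℝ :=
  ent p (fun ω => (X ω, W ω)) + ent p (fun ω => (Y ω, W ω))
    - ent p (fun ω => (X ω, Y ω, W ω)) - ent p W

/-- `X` and `Y` are conditionally independent given `W` under `p`
(the Markov chain `X − W − Y`). -/
def CondIndep {Ω α β γ : Type} [Fintype Ω] [Fintype α] [Fintype β] [Fintype γ]
    [DecidableEq α] [DecidableEq β] [DecidableEq γ]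
    (p : Ω → ℝ) (X : Ω → α) (Y : Ω → β) (W : Ω → γ) : Prop :=
  ∀ x y w,
    lawOf p (fun ω => (X ω, Y ω, W ω)) (x, y, w) * lawOf p W w
      = lawOf p (fun ω => (X ω, W ω)) (x, w) * lawOf p (fun ω => (Y ω, W ω)) (y, w)

/-- `X` and `Y` are independent under `p`. -/
def IndepRV {Ω α β : Type} [Fintype Ω] [Fintype α] [Fintype β]
    [DecidableEq α] [DecidableEq β]
    (p : Ω → ℝ) (X : Ω → α) (Y : Ω → β) : Prop :=
  ∀ a b, lawOf p (fun ω => (X ω, Y ω)) (a, b) = lawOf p X a * lawOf p Y b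

section Helpers

set_option linter.unusedSectionVars false

variable {Ω Ω' α β γ : Type} [Fintype Ω] [Fintype Ω'] [Fintype α] [Fintype β] [Fintype γ]
  [DecidableEq α] [DecidableEq β] [DecidableEq γ]

lemma lawOf_nonneg (p : Ω → ℝ) (hp : ∀ ω, 0 ≤ p ω) (f : Ω → α) (a : α) :
    0 ≤ lawOf p f a := by
  apply Finset.sum_nonneg; intro ω _; split <;> simp [hp ω]

lemma sum_lawOf (p : Ω → ℝ) (f : Ω → α) : ∑ a, lawOf p f a = ∑ ω, p ω := by
  simp only [lawOf]
  rw [Finset.sum_comm]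
  simp

lemma lawOf_comp [DecidableEq Ω'] (p : Ω → ℝ) (e : Ω → Ω') (F : Ω' → α) (a : α) :
    lawOf (lawOf p e) F a = lawOf p (fun ω => F (e ω)) a := by
  simp only [lawOf]
  have key : ∀ x : Ω', (if F x = a then ∑ ω, if e ω = x then p ω else 0 else 0)
      = ∑ ω, if e ω = x then (if F x = a then p ω else 0) else 0 := by
    intro x; split
    · apply Finset.sum_congr rfl; intro ω _; split <;> simp_all
    · symm; apply Finset.sum_eq_zero; intro ω _; split <;> simp_all
  simp only [key]
  rw [Finset.sum_comm]
  apply Finset.sum_congr rfl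
  intro ω _
  rw [Finset.sum_eq_single (e ω)]
  · simp
  · intro x _ hx; rw [if_neg (fun h => hx h.symm)]
  · simp

lemma lawOf_congr_iff (p : Ω → ℝ) (F : Ω → α) (G : Ω → β) (a : α) (b : β)
    (h : ∀ ω, F ω = a ↔ G ω = b) : lawOf p F a = lawOf p G b := by
  apply Finset.sum_congr rfl
  intro ω _; simp only [h ω]

lemma lawOf_eq_zero (p : Ω → ℝ) (F : Ω → α) (a : α) (h : ∀ ω, F ω ≠ a) :
    lawOf p F a = 0 := by
  apply Finset.sum_eq_zero; intro ω _; simp [h ω]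

lemma lawOf_eq_single (p : Ω → ℝ) (F : Ω → α) (a : α) (ω0 : Ω)
    (h : ∀ ω, F ω = a ↔ ω = ω0) : lawOf p F a = p ω0 := by
  rw [lawOf, Finset.sum_eq_single ω0] <;> simp_all [h ω0]

lemma point_zero_of_marg (p : Ω → ℝ) (hp : ∀ ω, 0 ≤ p ω) (W : Ω → γ) (w : γ)
    (h : lawOf p W w = 0) (ω : Ω) (hω : W ω = w) : p ω = 0 := by
  have := (Finset.sum_eq_zero_iff_of_nonneg (fun ω _ => by
    split <;> simp [hp ω] : ∀ ω ∈ Finset.univ, 0 ≤ if W ω = w then p ω else 0)).mp h ω (mem_univ ω)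
  simpa [hω] using this

lemma lawOf_zero_of_marg (p : Ω → ℝ) (hp : ∀ ω, 0 ≤ p ω) (W : Ω → γ) (w : γ)
    (h : lawOf p W w = 0) (F : Ω → α) (a : α) (hFW : ∀ ω, F ω = a → W ω = w) :
    lawOf p F a = 0 := by
  apply Finset.sum_eq_zero; intro ω _
  split
  · exact point_zero_of_marg p hp W w h ω (hFW ω ‹_›)
  · rfl

lemma sum_lawOf_fst (p : Ω → ℝ) (F : Ω → α × γ) (c : γ) :
    ∑ a, lawOf p F (a, c) = lawOf p (fun ω => (F ω).2) c := by
  simp only [lawOf]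
  rw [Finset.sum_comm]
  apply Finset.sum_congr rfl
  intro ω _
  by_cases h : (F ω).2 = c <;> simp [Prod.ext_iff, h]

lemma H2_lawOf_inj (q : α → ℝ) (g : α → β) (hg : Function.Injective g) :
    H2 (lawOf q g) = H2 q := by
  simp only [H2, neg_inj]
  rw [← Finset.sum_subset (Finset.subset_univ (Finset.univ.image g))]
  · rw [Finset.sum_image (fun a _ b _ h => hg h)]
    apply Finset.sum_congr rfl
    intro a _
    rw [lawOf_eq_single q g (g a) a (fun ω => ⟨fun h => hg h, fun h => by rw [h]⟩)]
  · intro b _ hb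
    rw [lawOf_eq_zero]
    · simp
    · intro ω hω; exact hb (Finset.mem_image.mpr ⟨ω, mem_univ ω, hω⟩)

lemma ent_lawOf_comp [DecidableEq Ω'] (p : Ω → ℝ) (e : Ω → Ω') (F : Ω' → α) (G : Ω → α)
    (h : ∀ ω, F (e ω) = G ω) : ent (lawOf p e) F = ent p G := by
  unfold ent; congr 1; funext a
  rw [lawOf_comp]
  exact lawOf_congr_iff _ _ _ _ _ (fun ω => by rw [h ω])

lemma ent_post_inj (p : Ω → ℝ) (X : Ω → α) (g : α → β) (hg : Function.Injective g)
    (G : Ω → β) (h : ∀ ω, g (X ω) = G ω) : ent p G = ent p X := by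
  unfold ent
  have hGX : lawOf p G = lawOf (lawOf p X) g := by
    funext b; rw [lawOf_comp]
    exact lawOf_congr_iff _ _ _ _ _ (fun ω => by rw [h ω])
  rw [hGX, H2_lawOf_inj _ g hg]

end Helpers

set_option maxHeartbeats 1000000 in
/-- **Cascade common information equals three-variable Wyner common
information:** `C_c(X;Y;Z) = C(X;Y;Z)`. -/
theorem cascade_CI_eq_wyner_CI
    {𝒳 𝒴 𝒵 : Type} [Fintype 𝒳] [Fintype 𝒴] [Fintype 𝒵]
    [DecidableEq 𝒳] [DecidableEq 𝒴] [DecidableEq 𝒵]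
    (Q : 𝒳 × 𝒴 × 𝒵 → ℝ) (hQ : IsPmf Q) :
    sInf {r : ℝ | ∃ (nU nV : ℕ) (p : 𝒳 × 𝒴 × 𝒵 × Fin nU × Fin nV → ℝ),
        IsPmf p ∧
        (∀ x y z, lawOf p (fun w => (w.1, w.2.1, w.2.2.1)) (x, y, z) = Q (x, y, z)) ∧
        CondIndep p (fun w => w.1) (fun w => w.2.1)
          (fun w => (w.2.2.2.1, w.2.2.2.2)) ∧
        CondIndep p (fun w => (w.1, w.2.1, w.2.2.2.1)) (fun w => w.2.2.1)
          (fun w => w.2.2.2.2) ∧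
        r = mi p (fun w => (w.1, w.2.1, w.2.2.1)) (fun w => (w.2.2.2.1, w.2.2.2.2))}
    = sInf {r : ℝ | ∃ (nU : ℕ) (p : 𝒳 × 𝒴 × 𝒵 × Fin nU → ℝ),
        IsPmf p ∧
        (∀ x y z, lawOf p (fun w => (w.1, w.2.1, w.2.2.1)) (x, y, z) = Q (x, y, z)) ∧
        -- `X, Y, Z` are mutually conditionally independent given `U`
        (∀ x y z u, p (x, y, z, u) * (lawOf p (fun w => w.2.2.2) u) ^ 2
          = lawOf p (fun w => (w.1, w.2.2.2)) (x, u)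
            * lawOf p (fun w => (w.2.1, w.2.2.2)) (y, u)
            * lawOf p (fun w => (w.2.2.1, w.2.2.2)) (z, u)) ∧
        r = mi p (fun w => (w.1, w.2.1, w.2.2.1)) (fun w => w.2.2.2)} := by
  congr 1
  ext r
  simp only [Set.mem_setOf_eq]
  constructor
  · -- cascade witness ⇒ wyner witness, via merging (U,V) into one variable
    rintro ⟨nU, nV, p, hp, hmarg, hC1, hC2, hr⟩
    have hnn := hp.1
    -- canonical forms of the two Markov conditions
    have h1 : ∀ x y u v,
        lawOf p (fun w => (w.1, w.2.1, w.2.2.2.1, w.2.2.2.2)) (x, y, u, v)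
            * lawOf p (fun w => (w.2.2.2.1, w.2.2.2.2)) (u, v)
          = lawOf p (fun w => (w.1, w.2.2.2.1, w.2.2.2.2)) (x, u, v)
            * lawOf p (fun w => (w.2.1, w.2.2.2.1, w.2.2.2.2)) (y, u, v) :=
      fun x y u v => hC1 x y (u, v)
    have h2 : ∀ x y z u v,
        p (x, y, z, u, v) * lawOf p (fun w => w.2.2.2.2) v
          = lawOf p (fun w => (w.1, w.2.1, w.2.2.2.1, w.2.2.2.2)) (x, y, u, v)
            * lawOf p (fun w => (w.2.2.1, w.2.2.2.2)) (z, v) := by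
      intro x y z u v
      have h := hC2 (x, y, u) z v
      rw [lawOf_eq_single p (fun w => ((w.1, w.2.1, w.2.2.2.1), w.2.2.1, w.2.2.2.2))
            ((x, y, u), z, v) (x, y, z, u, v)
            (by rintro ⟨a, b, c, d, f⟩; simp only [Prod.mk.injEq]; try tauto),
          lawOf_congr_iff p (fun w => ((w.1, w.2.1, w.2.2.2.1), w.2.2.2.2))
            (fun w => (w.1, w.2.1, w.2.2.2.1, w.2.2.2.2)) ((x, y, u), v) (x, y, u, v)
            (fun ω => by simp only [Prod.mk.injEq]; try tauto)] at h
      exact h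
    have hsum1 : ∀ z u v, ∑ x, ∑ y, p (x, y, z, u, v)
        = lawOf p (fun w => (w.2.2.1, w.2.2.2.1, w.2.2.2.2)) (z, u, v) := by
      intro z u v
      simp [lawOf, Fintype.sum_prod_type, Prod.ext_iff, ite_and,
        Finset.sum_ite_eq, Finset.sum_ite_eq']
    have hstar : ∀ z u v,
        lawOf p (fun w => (w.2.2.1, w.2.2.2.1, w.2.2.2.2)) (z, u, v)
            * lawOf p (fun w => w.2.2.2.2) v
          = lawOf p (fun w => (w.2.2.2.1, w.2.2.2.2)) (u, v)
            * lawOf p (fun w => (w.2.2.1, w.2.2.2.2)) (z, v) := by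
      intro z u v
      rw [← hsum1 z u v, Finset.sum_mul]
      have step1 : ∀ x, (∑ y, p (x, y, z, u, v)) * lawOf p (fun w => w.2.2.2.2) v
          = ∑ y, lawOf p (fun w => (w.1, w.2.1, w.2.2.2.1, w.2.2.2.2)) (x, y, u, v)
              * lawOf p (fun w => (w.2.2.1, w.2.2.2.2)) (z, v) := by
        intro x; rw [Finset.sum_mul]
        exact Finset.sum_congr rfl (fun y _ => h2 x y z u v)
      rw [Finset.sum_congr rfl (fun x _ => step1 x), Finset.sum_comm]
      have step2 : ∀ y,
          ∑ x, lawOf p (fun w => (w.1, w.2.1, w.2.2.2.1, w.2.2.2.2)) (x, y, u, v)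
              * lawOf p (fun w => (w.2.2.1, w.2.2.2.2)) (z, v)
          = lawOf p (fun w => (w.2.1, w.2.2.2.1, w.2.2.2.2)) (y, u, v)
              * lawOf p (fun w => (w.2.2.1, w.2.2.2.2)) (z, v) := by
        intro y
        rw [← Finset.sum_mul]
        exact congrArg (fun t => t * lawOf p (fun w => (w.2.2.1, w.2.2.2.2)) (z, v))
          (sum_lawOf_fst p _ _)
      rw [Finset.sum_congr rfl (fun y _ => step2 y), ← Finset.sum_mul]
      exact congrArg (fun t => t * lawOf p (fun w => (w.2.2.1, w.2.2.2.2)) (z, v))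
        (sum_lawOf_fst p _ _)
    refine ⟨nU * nV,
      lawOf p (fun w => (w.1, w.2.1, w.2.2.1, finProdFinEquiv (w.2.2.2.1, w.2.2.2.2))),
      ⟨fun a => lawOf_nonneg p hnn _ a, by rw [sum_lawOf]; exact hp.2⟩, ?_, ?_, ?_⟩
    · intro x y z
      rw [lawOf_comp]
      exact hmarg x y z
    · intro x y z w0
      obtain ⟨⟨u, v⟩, rfl⟩ : ∃ uv : Fin nU × Fin nV, finProdFinEquiv uv = w0 :=
        ⟨finProdFinEquiv.symm w0, Equiv.apply_symm_apply _ _⟩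
      simp only [lawOf_comp]
      show lawOf p (fun w => (w.1, w.2.1, w.2.2.1, finProdFinEquiv (w.2.2.2.1, w.2.2.2.2)))
            (x, y, z, finProdFinEquiv (u, v))
          * lawOf p (fun w => finProdFinEquiv (w.2.2.2.1, w.2.2.2.2)) (finProdFinEquiv (u, v)) ^ 2
        = lawOf p (fun w => (w.1, finProdFinEquiv (w.2.2.2.1, w.2.2.2.2)))
            (x, finProdFinEquiv (u, v))
          * lawOf p (fun w => (w.2.1, finProdFinEquiv (w.2.2.2.1, w.2.2.2.2)))
            (y, finProdFinEquiv (u, v))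
          * lawOf p (fun w => (w.2.2.1, finProdFinEquiv (w.2.2.2.1, w.2.2.2.2)))
            (z, finProdFinEquiv (u, v))
      rw [lawOf_eq_single p _ _ (x, y, z, u, v)
            (by rintro ⟨a, b, c, d, f⟩; simp only [Prod.mk.injEq, Equiv.apply_eq_iff_eq]; try tauto),
          lawOf_congr_iff p (fun w => finProdFinEquiv (w.2.2.2.1, w.2.2.2.2))
            (fun w => (w.2.2.2.1, w.2.2.2.2)) (finProdFinEquiv (u, v)) (u, v)
            (fun ω => by simp only [Prod.mk.injEq, Equiv.apply_eq_iff_eq]; try tauto),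
          lawOf_congr_iff p (fun w => (w.1, finProdFinEquiv (w.2.2.2.1, w.2.2.2.2)))
            (fun w => (w.1, w.2.2.2.1, w.2.2.2.2)) (x, finProdFinEquiv (u, v)) (x, u, v)
            (fun ω => by simp only [Prod.mk.injEq, Equiv.apply_eq_iff_eq]; try tauto),
          lawOf_congr_iff p (fun w => (w.2.1, finProdFinEquiv (w.2.2.2.1, w.2.2.2.2)))
            (fun w => (w.2.1, w.2.2.2.1, w.2.2.2.2)) (y, finProdFinEquiv (u, v)) (y, u, v)
            (fun ω => by simp only [Prod.mk.injEq, Equiv.apply_eq_iff_eq]; try tauto),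
          lawOf_congr_iff p (fun w => (w.2.2.1, finProdFinEquiv (w.2.2.2.1, w.2.2.2.2)))
            (fun w => (w.2.2.1, w.2.2.2.1, w.2.2.2.2)) (z, finProdFinEquiv (u, v)) (z, u, v)
            (fun ω => by simp only [Prod.mk.injEq, Equiv.apply_eq_iff_eq]; try tauto)]
      by_cases hv : lawOf p (fun w => w.2.2.2.2) v = 0
      · rw [point_zero_of_marg p hnn (fun w => w.2.2.2.2) v hv (x, y, z, u, v) rfl,
          lawOf_zero_of_marg p hnn (fun w => w.2.2.2.2) v hv
            (fun w => (w.2.2.1, w.2.2.2.1, w.2.2.2.2)) (z, u, v)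
            (fun ω h => congrArg (fun t => t.2.2) h)]
        ring
      · have key : lawOf p (fun w => w.2.2.2.2) v
            * (p (x, y, z, u, v) * lawOf p (fun w => (w.2.2.2.1, w.2.2.2.2)) (u, v) ^ 2)
            = lawOf p (fun w => w.2.2.2.2) v
            * (lawOf p (fun w => (w.1, w.2.2.2.1, w.2.2.2.2)) (x, u, v)
              * lawOf p (fun w => (w.2.1, w.2.2.2.1, w.2.2.2.2)) (y, u, v)
              * lawOf p (fun w => (w.2.2.1, w.2.2.2.1, w.2.2.2.2)) (z, u, v)) := by
          linear_combination
            (lawOf p (fun w => (w.2.2.2.1, w.2.2.2.2)) (u, v)) ^ 2 * h2 x y z u v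
            - lawOf p (fun w => (w.1, w.2.2.2.1, w.2.2.2.2)) (x, u, v)
              * lawOf p (fun w => (w.2.1, w.2.2.2.1, w.2.2.2.2)) (y, u, v) * hstar z u v
            + lawOf p (fun w => (w.2.2.1, w.2.2.2.2)) (z, v)
              * lawOf p (fun w => (w.2.2.2.1, w.2.2.2.2)) (u, v) * h1 x y u v
        exact mul_left_cancel₀ hv key
    · rw [hr]
      simp only [mi]
      rw [ent_lawOf_comp p (fun w => (w.1, w.2.1, w.2.2.1, finProdFinEquiv (w.2.2.2.1, w.2.2.2.2))) (fun w => (w.1, w.2.1, w.2.2.1))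
            (fun w => (w.1, w.2.1, w.2.2.1)) (fun ω => rfl),
          (ent_lawOf_comp p (fun w => (w.1, w.2.1, w.2.2.1, finProdFinEquiv (w.2.2.2.1, w.2.2.2.2))) (fun w => w.2.2.2)
            (fun w => finProdFinEquiv (w.2.2.2.1, w.2.2.2.2)) (fun ω => rfl)).trans
            (ent_post_inj p (fun w => (w.2.2.2.1, w.2.2.2.2)) (⇑finProdFinEquiv)
              finProdFinEquiv.injective _ (fun ω => rfl)),
          (ent_lawOf_comp p (fun w => (w.1, w.2.1, w.2.2.1, finProdFinEquiv (w.2.2.2.1, w.2.2.2.2))) (fun w => ((w.1, w.2.1, w.2.2.1), w.2.2.2))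
            (fun w => ((w.1, w.2.1, w.2.2.1), finProdFinEquiv (w.2.2.2.1, w.2.2.2.2)))
            (fun ω => rfl)).trans
            (ent_post_inj p (fun w => ((w.1, w.2.1, w.2.2.1), w.2.2.2.1, w.2.2.2.2))
              (fun a => (a.1, finProdFinEquiv a.2))
              (fun a b h => by
                rw [Prod.ext_iff] at h ⊢
                exact ⟨h.1, finProdFinEquiv.injective h.2⟩) _ (fun ω => rfl))]
  · -- wyner witness ⇒ cascade witness, via V := U
    rintro ⟨nU, p, hp, hmarg, hW, hr⟩
    have hnn := hp.1
    have hsumZ : ∀ x y u, ∑ z, p (x, y, z, u)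
        = lawOf p (fun w => (w.1, w.2.1, w.2.2.2)) (x, y, u) := by
      intro x y u
      simp [lawOf, Fintype.sum_prod_type, Prod.ext_iff, ite_and,
        Finset.sum_ite_eq, Finset.sum_ite_eq']
    have keyA : ∀ x y u,
        lawOf p (fun w => (w.1, w.2.1, w.2.2.2)) (x, y, u) * lawOf p (fun w => w.2.2.2) u
          = lawOf p (fun w => (w.1, w.2.2.2)) (x, u)
            * lawOf p (fun w => (w.2.1, w.2.2.2)) (y, u) := by
      intro x y u
      by_cases hu : lawOf p (fun w => w.2.2.2) u = 0
      · rw [hu, lawOf_zero_of_marg p hnn (fun w => w.2.2.2) u hu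
            (fun w => (w.1, w.2.2.2)) (x, u) (fun ω h => congrArg Prod.snd h),
          mul_zero, zero_mul]
      · apply mul_right_cancel₀ hu
        have hZ : ∑ z, lawOf p (fun w => (w.2.2.1, w.2.2.2)) (z, u)
            = lawOf p (fun w => w.2.2.2) u := sum_lawOf_fst p _ _
        calc lawOf p (fun w => (w.1, w.2.1, w.2.2.2)) (x, y, u)
              * lawOf p (fun w => w.2.2.2) u * lawOf p (fun w => w.2.2.2) u
            = ∑ z, p (x, y, z, u) * lawOf p (fun w => w.2.2.2) u ^ 2 := by
              rw [← Finset.sum_mul, hsumZ]; ring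
          _ = ∑ z, lawOf p (fun w => (w.1, w.2.2.2)) (x, u)
                * lawOf p (fun w => (w.2.1, w.2.2.2)) (y, u)
                * lawOf p (fun w => (w.2.2.1, w.2.2.2)) (z, u) :=
              Finset.sum_congr rfl (fun z _ => hW x y z u)
          _ = _ := by rw [← Finset.mul_sum, hZ]
    have keyA2 : ∀ x y z u,
        p (x, y, z, u) * lawOf p (fun w => w.2.2.2) u
          = lawOf p (fun w => (w.1, w.2.1, w.2.2.2)) (x, y, u)
            * lawOf p (fun w => (w.2.2.1, w.2.2.2)) (z, u) := by
      intro x y z u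
      by_cases hu : lawOf p (fun w => w.2.2.2) u = 0
      · rw [hu, lawOf_zero_of_marg p hnn (fun w => w.2.2.2) u hu
            (fun w => (w.2.2.1, w.2.2.2)) (z, u) (fun ω h => congrArg Prod.snd h),
          mul_zero, mul_zero]
      · apply mul_right_cancel₀ hu
        linear_combination hW x y z u
          - lawOf p (fun w => (w.2.2.1, w.2.2.2)) (z, u) * keyA x y u
    refine ⟨nU, nU, lawOf p (fun w => (w.1, w.2.1, w.2.2.1, w.2.2.2, w.2.2.2)),
      ⟨fun a => lawOf_nonneg p hnn _ a, by rw [sum_lawOf]; exact hp.2⟩, ?_, ?_, ?_, ?_⟩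
    · intro x y z
      rw [lawOf_comp]
      exact hmarg x y z
    · -- X − (U,V) − Y
      intro x y w
      obtain ⟨u, v⟩ := w
      simp only [lawOf_comp]
      show lawOf p (fun w => (w.1, w.2.1, (w.2.2.2, w.2.2.2))) (x, y, (u, v))
            * lawOf p (fun w => (w.2.2.2, w.2.2.2)) (u, v)
          = lawOf p (fun w => (w.1, (w.2.2.2, w.2.2.2))) (x, (u, v))
            * lawOf p (fun w => (w.2.1, (w.2.2.2, w.2.2.2))) (y, (u, v))
      by_cases huv : u = v
      · subst huv
        rw [lawOf_congr_iff p (fun w => (w.1, w.2.1, (w.2.2.2, w.2.2.2)))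
              (fun w => (w.1, w.2.1, w.2.2.2)) (x, y, (u, u)) (x, y, u)
              (fun ω => by simp only [Prod.mk.injEq]; try tauto),
            lawOf_congr_iff p (fun w => (w.2.2.2, w.2.2.2))
              (fun w => w.2.2.2) (u, u) u
              (fun ω => by simp only [Prod.mk.injEq]; try tauto),
            lawOf_congr_iff p (fun w => (w.1, (w.2.2.2, w.2.2.2)))
              (fun w => (w.1, w.2.2.2)) (x, (u, u)) (x, u)
              (fun ω => by simp only [Prod.mk.injEq]; try tauto),
            lawOf_congr_iff p (fun w => (w.2.1, (w.2.2.2, w.2.2.2)))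
              (fun w => (w.2.1, w.2.2.2)) (y, (u, u)) (y, u)
              (fun ω => by simp only [Prod.mk.injEq]; try tauto)]
        exact keyA x y u
      · rw [lawOf_eq_zero p (fun w => (w.1, w.2.1, (w.2.2.2, w.2.2.2))) (x, y, (u, v))
              (fun ω h => by
                apply huv
                injection h with hA hB
                injection hB with hC hD
                injection hD with hE hF
                exact hE.symm.trans hF),
            lawOf_eq_zero p (fun w => (w.1, (w.2.2.2, w.2.2.2))) (x, (u, v))
              (fun ω h => by
                apply huv
                injection h with hA hB
                injection hB with hE hF
                exact hE.symm.trans hF),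
            zero_mul, zero_mul]
    · -- (X,Y,U) − V − Z
      intro xyu z v
      obtain ⟨x, y, u⟩ := xyu
      simp only [lawOf_comp]
      show lawOf p (fun w => ((w.1, w.2.1, w.2.2.2), w.2.2.1, w.2.2.2)) ((x, y, u), z, v)
            * lawOf p (fun w => w.2.2.2) v
          = lawOf p (fun w => ((w.1, w.2.1, w.2.2.2), w.2.2.2)) ((x, y, u), v)
            * lawOf p (fun w => (w.2.2.1, w.2.2.2)) (z, v)
      by_cases huv : u = v
      · subst huv
        rw [lawOf_eq_single p (fun w => ((w.1, w.2.1, w.2.2.2), w.2.2.1, w.2.2.2))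
              ((x, y, u), z, u) (x, y, z, u)
              (by rintro ⟨a, b, c, d⟩; simp only [Prod.mk.injEq]; try tauto),
            lawOf_congr_iff p (fun w => ((w.1, w.2.1, w.2.2.2), w.2.2.2))
              (fun w => (w.1, w.2.1, w.2.2.2)) ((x, y, u), u) (x, y, u)
              (fun ω => by simp only [Prod.mk.injEq]; try tauto)]
        exact keyA2 x y z u
      · rw [lawOf_eq_zero p (fun w => ((w.1, w.2.1, w.2.2.2), w.2.2.1, w.2.2.2))
              ((x, y, u), z, v)
              (fun ω h => by
                apply huv
                injection h with hA hB
                injection hA with hC hD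
                injection hD with hE hF
                injection hB with hG hH
                exact hF.symm.trans hH),
            lawOf_eq_zero p (fun w => ((w.1, w.2.1, w.2.2.2), w.2.2.2)) ((x, y, u), v)
              (fun ω h => by
                apply huv
                injection h with hA hB
                injection hA with hC hD
                injection hD with hE hF
                exact hF.symm.trans hB),
            zero_mul, zero_mul]
    · rw [hr]
      simp only [mi]
      rw [ent_lawOf_comp p (fun w => (w.1, w.2.1, w.2.2.1, w.2.2.2, w.2.2.2)) (fun w => (w.1, w.2.1, w.2.2.1))
            (fun w => (w.1, w.2.1, w.2.2.1)) (fun ω => rfl),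
          (ent_lawOf_comp p (fun w => (w.1, w.2.1, w.2.2.1, w.2.2.2, w.2.2.2)) (fun w => (w.2.2.2.1, w.2.2.2.2))
            (fun w => (w.2.2.2, w.2.2.2)) (fun ω => rfl)).trans
            (ent_post_inj p (fun w => w.2.2.2) (fun u => (u, u))
              (fun a b h => by
                rw [Prod.ext_iff] at h
                exact h.1) _ (fun ω => rfl)),
          (ent_lawOf_comp p (fun w => (w.1, w.2.1, w.2.2.1, w.2.2.2, w.2.2.2)) (fun w => ((w.1, w.2.1, w.2.2.1), w.2.2.2.1, w.2.2.2.2))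
            (fun w => ((w.1, w.2.1, w.2.2.1), w.2.2.2, w.2.2.2)) (fun ω => rfl)).trans
            (ent_post_inj p (fun w => ((w.1, w.2.1, w.2.2.1), w.2.2.2))
              (fun a => (a.1, a.2, a.2))
              (fun a b h => by
                rw [Prod.ext_iff] at h ⊢
                refine ⟨h.1, ?_⟩
                have := Prod.ext_iff.mp h.2
                exact this.1) _ (fun ω => rfl))]

end
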